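/- Define the height h(x) of a point x ∈ S² to be the least positive integer h such that √h·x has integer coordinates (when it exists). If x ∈ S² has height h(x) and γ is a Hurwitz quaternion of norm n(γ) such that γ·x ∉ {x, -x}, where γ·x = γ x γ̄ / n(γ) is the rotation action, then the inner product satisfies -n(γ)h(x) + 1/2 ≤ n(γ)h(x)·⟨γ·x, x⟩ ≤ n(γ)h(x) - 1/2. -/

import Mathlib

open Quaternion

/-- `γ` is a Hurwitz quaternion: `γ = (a + bi + cj + dk)/2` with `a,b,c,d ∈ ℤ`
all of the same parity. -/
def IsHurwitz (γ : ℍ[ℝ]) : Prop :=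
  ∃ a b c d : ℤ, a % 2 = b % 2 ∧ b % 2 = c % 2 ∧ c % 2 = d % 2 ∧
    γ = ⟨(a : ℝ) / 2, (b : ℝ) / 2, (c : ℝ) / 2, (d : ℝ) / 2⟩

/-- `√h · x` has integer coordinates (for `x` a pure quaternion). -/
def IntCoords (h : ℕ) (x : ℍ[ℝ]) : Prop :=
  ∃ u v w : ℤ, Real.sqrt h * x.imI = u ∧ Real.sqrt h * x.imJ = v ∧ Real.sqrt h * x.imK = w

/-- `h` is the height of `x`: the least positive integer such that `√h·x` has
integer coordinates. -/
def HasHeight (x : ℍ[ℝ]) (h : ℕ) : Prop :=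
  0 < h ∧ IntCoords h x ∧ ∀ k : ℕ, 0 < k → IntCoords k x → h ≤ k

/-- The rotation action of a nonzero quaternion on pure quaternions:
`γ·x = γ x γ̄ / n(γ)`. -/
noncomputable def quatAct (γ x : ℍ[ℝ]) : ℍ[ℝ] :=
  (Quaternion.normSq γ)⁻¹ • (γ * x * star γ)

/-- The Euclidean inner product of two pure quaternions: `⟨p,q⟩ = -re(pq)`. -/
noncomputable def pureInner (p q : ℍ[ℝ]) : ℝ := -(p * q).re

/-!
Put `y = √h · x`, a pure quaternion with integer coordinates. Then
`n(γ) h ⟨γ·x, x⟩ = -re(γ y γ̄ y)`, and writing `γ = A/2` with `A` an integer quaternion whose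
coordinates share one parity, `4 re(γ y γ̄ y) = re(A y Ā y)` is even, so the left side is a
half-integer. Since `γ·x` and `x` are unit vectors with `γ·x ≠ ±x`, Cauchy–Schwarz is strict:
`|⟨γ·x, x⟩| < 1`. A half-integer of absolute value less than the integer `n(γ) h` is at least
`1/2` away from `±n(γ) h`.
-/

open scoped RealInnerProductSpace

def IsHalfInteger (r : ℝ) : Prop := ∃ k : ℤ, r = k / 2

theorem isHalfInteger_intCast (n : ℤ) : IsHalfInteger n := ⟨2 * n, by push_cast; ring⟩

theorem IsHalfInteger.neg {r : ℝ} (hr : IsHalfInteger r) : IsHalfInteger (-r) := by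
  obtain ⟨k, rfl⟩ := hr
  exact ⟨-k, by push_cast; ring⟩

theorem IsHalfInteger.le_sub_half_of_lt {r s : ℝ} (hr : IsHalfInteger r) (hs : IsHalfInteger s)
    (hrs : r < s) : r ≤ s - 1 / 2 := by
  obtain ⟨k, rfl⟩ := hr
  obtain ⟨l, rfl⟩ := hs
  have hkl : k + 1 ≤ l := by
    have : (k : ℝ) < l := by linarith
    exact_mod_cast this
  have : (k : ℝ) + 1 ≤ l := by exact_mod_cast hkl
  linarith

theorem IsHalfInteger.abs_le_sub_half_of_abs_lt {r s : ℝ} (hr : IsHalfInteger r)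
    (hs : IsHalfInteger s) (hrs : |r| < s) : -s + 1 / 2 ≤ r ∧ r ≤ s - 1 / 2 := by
  obtain ⟨hlt, hgt⟩ := abs_lt.mp hrs
  have := hs.neg.le_sub_half_of_lt hr hlt
  exact ⟨by linarith, hr.le_sub_half_of_lt hs hgt⟩

theorem Quaternion.even_re_mul_mul_star_mul {A Y : ℍ[ℤ]} (hI : A.imI ≡ A.re [ZMOD 2])
    (hJ : A.imJ ≡ A.re [ZMOD 2]) (hK : A.imK ≡ A.re [ZMOD 2]) (hY : Y.re = 0) :
    Even (A * Y * star A * Y).re := by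
  rw [even_iff_two_dvd, ← Nat.cast_ofNat, ← ZMod.intCast_zmod_eq_zero_iff_dvd]
  replace hI : (A.imI : ZMod 2) = A.re := (ZMod.intCast_eq_intCast_iff _ _ 2).mpr hI
  replace hJ : (A.imJ : ZMod 2) = A.re := (ZMod.intCast_eq_intCast_iff _ _ 2).mpr hJ
  replace hK : (A.imK : ZMod 2) = A.re := (ZMod.intCast_eq_intCast_iff _ _ 2).mpr hK
  simp only [re_mul, imI_mul, imJ_mul, imK_mul, re_star, imI_star, imJ_star, imK_star, hY]
  push_cast
  rw [hI, hJ, hK]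
  -- modulo 2 only the common parity of `A` and the coordinates of `Y` remain: a finite check
  generalize (A.re : ZMod 2) = e, (Y.imI : ZMod 2) = u, (Y.imJ : ZMod 2) = v, (Y.imK : ZMod 2) = w
  revert e u v w
  decide

theorem IsHurwitz.isHalfInteger_re_mul_mul_star_mul {γ y : ℍ[ℝ]} (hγ : IsHurwitz γ)
    (hy : y.re = 0) {u v w : ℤ} (hu : y.imI = u) (hv : y.imJ = v) (hw : y.imK = w) :
    IsHalfInteger (γ * y * star γ * y).re := by
  obtain ⟨a, b, c, d, hab, hbc, hcd, hγ⟩ := hγ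
  have hγr : γ.re = a / 2 := by rw [hγ]
  have hγi : γ.imI = b / 2 := by rw [hγ]
  have hγj : γ.imJ = c / 2 := by rw [hγ]
  have hγk : γ.imK = d / 2 := by rw [hγ]
  obtain ⟨A, hAr, hAi, hAj, hAk⟩ :
      ∃ A : ℍ[ℤ], A.re = a ∧ A.imI = b ∧ A.imJ = c ∧ A.imK = d :=
    ⟨⟨a, b, c, d⟩, rfl, rfl, rfl, rfl⟩
  obtain ⟨Y, hYr, hYi, hYj, hYk⟩ :
      ∃ Y : ℍ[ℤ], Y.re = 0 ∧ Y.imI = u ∧ Y.imJ = v ∧ Y.imK = w :=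
    ⟨⟨0, u, v, w⟩, rfl, rfl, rfl, rfl⟩
  obtain ⟨k, hk⟩ := Quaternion.even_re_mul_mul_star_mul (A := A) (Y := Y)
    (by rw [hAi, hAr]; exact hab.symm) (by rw [hAj, hAr]; exact (hbc ▸ hab).symm)
    (by rw [hAk, hAr]; exact (hcd ▸ hbc ▸ hab).symm) hYr
  have hquarter : (γ * y * star γ * y).re * 4 = ((A * Y * star A * Y).re : ℝ) := by
    simp only [re_mul, imI_mul, imJ_mul, imK_mul, re_star, imI_star, imJ_star, imK_star,
      hy, hu, hv, hw, hγr, hγi, hγj, hγk, hAr, hAi, hAj, hAk, hYr, hYi, hYj, hYk]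
    push_cast
    ring
  refine ⟨k, ?_⟩
  rw [hk] at hquarter
  push_cast at hquarter
  linarith

theorem IsHurwitz.exists_normSq_eq_intCast {γ : ℍ[ℝ]} (hγ : IsHurwitz γ) :
    ∃ N : ℤ, normSq γ = N := by
  obtain ⟨a, b, c, d, hab, hbc, hcd, hγ⟩ := hγ
  obtain ⟨s, rfl⟩ : ∃ s, b = a + 2 * s := ⟨(b - a) / 2, by omega⟩
  obtain ⟨t, rfl⟩ : ∃ t, c = a + 2 * t := ⟨(c - a) / 2, by omega⟩
  obtain ⟨r, rfl⟩ : ∃ r, d = a + 2 * r := ⟨(d - a) / 2, by omega⟩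
  refine ⟨a ^ 2 + a * (s + t + r) + s ^ 2 + t ^ 2 + r ^ 2, ?_⟩
  rw [normSq_def', hγ]
  push_cast
  ring

theorem Quaternion.re_mul_smul_mul_star_mul_smul {R : Type*} [CommRing R] (γ x : ℍ[R]) (s : R) :
    (γ * (s • x) * star γ * (s • x)).re = s ^ 2 * (γ * x * star γ * x).re := by
  simp only [mul_smul_comm, smul_mul_assoc, smul_smul, re_smul, smul_eq_mul, sq]

theorem normSq_quatAct {γ : ℍ[ℝ]} (hγ : γ ≠ 0) (x : ℍ[ℝ]) :
    normSq (quatAct γ x) = normSq x := by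
  have hn : normSq γ ≠ 0 := normSq_ne_zero.mpr hγ
  rw [quatAct, normSq_smul, map_mul, map_mul, normSq_star]
  field_simp

theorem normSq_mul_pureInner_quatAct {γ : ℍ[ℝ]} (hγ : γ ≠ 0) (x : ℍ[ℝ]) :
    normSq γ * pureInner (quatAct γ x) x = -(γ * x * star γ * x).re := by
  rw [pureInner, quatAct, smul_mul_assoc, re_smul, smul_eq_mul, mul_neg,
    mul_inv_cancel_left₀ (normSq_ne_zero.mpr hγ)]

theorem pureInner_eq_inner (p : ℍ[ℝ]) {x : ℍ[ℝ]} (hx : x.re = 0) :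
    pureInner p x = ⟪p, x⟫ := by
  rw [pureInner, inner_def, star_eq_neg.mpr hx, mul_neg, re_neg]

theorem abs_pureInner_lt_one {p x : ℍ[ℝ]} (hx : x.re = 0) (hp1 : normSq p = 1)
    (hx1 : normSq x = 1) (hpx : p ≠ x) (hpx' : p ≠ -x) : |pureInner p x| < 1 := by
  have norm_eq_one : ∀ q : ℍ[ℝ], normSq q = 1 → ‖q‖ = 1 := fun q hq =>
    (pow_eq_one_iff_of_nonneg (norm_nonneg q) two_ne_zero).mp
      (by rwa [sq, ← normSq_eq_norm_mul_self])
  have hp := norm_eq_one p hp1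
  have hx' := norm_eq_one x hx1
  rw [pureInner_eq_inner p hx, abs_lt]
  exact ⟨(neg_one_le_real_inner_of_norm_eq_one hp hx').lt_of_ne
      (fun h => hpx' ((inner_eq_neg_one_iff_of_norm_eq_one hp hx').mp h.symm)),
    (real_inner_le_one_of_norm_eq_one hp hx').lt_of_ne
      (fun h => hpx ((inner_eq_one_iff_of_norm_eq_one hp hx').mp h))⟩

/-- If `x ∈ S²` has height `h(x)` and `γ` is a nonzero Hurwitz quaternion with
`γ·x ∉ {x, -x}`, then `-n(γ)h(x) + 1/2 ≤ n(γ)h(x)·⟨γ·x,x⟩ ≤ n(γ)h(x) - 1/2`. -/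
theorem hurwitz_inner_half_integer_gap (x : ℍ[ℝ]) (hre : x.re = 0)
    (hnorm : Quaternion.normSq x = 1) (h : ℕ) (hh : HasHeight x h)
    (γ : ℍ[ℝ]) (hγ : IsHurwitz γ) (hγ0 : γ ≠ 0)
    (h1 : quatAct γ x ≠ x) (h2 : quatAct γ x ≠ -x) :
    -(Quaternion.normSq γ * h) + 1 / 2 ≤
        Quaternion.normSq γ * h * pureInner (quatAct γ x) x ∧
      Quaternion.normSq γ * h * pureInner (quatAct γ x) x ≤
        Quaternion.normSq γ * h - 1 / 2 := by
  obtain ⟨hh0, ⟨u, v, w, hu, hv, hw⟩, -⟩ := hh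
  obtain ⟨N, hN⟩ := hγ.exists_normSq_eq_intCast
  have hpos : 0 < Quaternion.normSq γ * h :=
    mul_pos (normSq_nonneg.lt_of_ne' (normSq_ne_zero.mpr hγ0)) (Nat.cast_pos.mpr hh0)
  have hscaled : Quaternion.normSq γ * h * pureInner (quatAct γ x) x =
      -(γ * (√h • x) * star γ * (√h • x)).re := by
    rw [re_mul_smul_mul_star_mul_smul, Real.sq_sqrt (Nat.cast_nonneg h), mul_right_comm,
      normSq_mul_pureInner_quatAct hγ0]
    ring
  set t := Quaternion.normSq γ * h * pureInner (quatAct γ x) x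
  have hhalf : IsHalfInteger t := by
    rw [hscaled]
    exact (hγ.isHalfInteger_re_mul_mul_star_mul (by simp [hre]) (by simpa using hu)
      (by simpa using hv) (by simpa using hw)).neg
  have hlt : |t| < Quaternion.normSq γ * h := by
    rw [abs_mul, abs_of_pos hpos]
    exact mul_lt_of_lt_one_right hpos
      (abs_pureInner_lt_one hre ((normSq_quatAct hγ0 x).trans hnorm) hnorm h1 h2)
  refine hhalf.abs_le_sub_half_of_abs_lt ?_ hlt
  rw [hN]
  exact_mod_cast isHalfInteger_intCast (N * h)
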